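/- arXiv:1503.01761 — 3 statements merged into one kernel-verified Lean document; each statement's English description precedes it below -/
import Mathlib

section
/- Let f be holomorphic on the open unit disk 𝔻, let u : 𝔻 → ℂ be continuously differentiable, and let 0 < r < 1. Then (1/2π) ∫₀^{2π} f(r e^{it}) u(r e^{it}) dt = (1/(π r²)) ∬_{{(x,y) : x²+y² < r²}} f(x+iy) ∂_{z̄}( u(z) z̄ )(x,y) dx dy, where z = x+iy, z̄ = x−iy and ∂_{z̄} = (1/2)(∂/∂x + i ∂/∂y). -/
/-!
Green's formula in complex form, `∮_{|z| = r} F dz = 2i ∬_{|z| < r} ∂̄F`, applied to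
`F = f u z̄`. On the circle `z̄ z = r²`, so `∮ f u z̄ dz = i r² ∫₀^{2π} f u dt`; since `f` is
holomorphic, `∂̄(f u z̄) = f ∂̄(u z̄)`.

Green's formula itself is the divergence theorem on the rectangle `[0, r] × [0, 2π]` of polar
coordinates `z = ρ e^{it}`, for the field `(z F(z), i e^{it} F(z))`: its divergence is
`2ρ ∂̄F(z)`, the sides `t = 0` and `t = 2π` cancel by periodicity, the side `ρ = 0` vanishes,
and the side `ρ = r` is `-i ∮ F dz`.
-/

open Complex MeasureTheory Metric Set ComplexConjugate Real

noncomputable def dbar (F : ℂ → ℂ) (z : ℂ) : ℂ :=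
  (1 / 2) * (fderiv ℝ F z 1 + I * fderiv ℝ F z I)

theorem ContinuousLinearMap.apply_add_I_mul_apply_I_mul (L : ℂ →L[ℝ] ℂ) (e : ℂ) :
    L e + I * L (I * e) = conj e * (L 1 + I * L I) := by
  have hL : ∀ v : ℂ, L v = v.re * L 1 + v.im * L I := fun v => by
    conv_lhs => rw [show v = v.re • (1 : ℂ) + v.im • I by simp [real_smul]]
    rw [map_add, map_smul, map_smul, real_smul, real_smul]
  have hconj : conj e = e.re - e.im * I := by apply Complex.ext <;> simp
  rw [hL e, hL (I * e), hconj]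
  simp only [mul_re, mul_im, I_re, I_im]
  push_cast
  linear_combination e.im * L I * I_sq

theorem fderiv_add_I_mul_fderiv_I_mul (F : ℂ → ℂ) (z e : ℂ) :
    fderiv ℝ F z e + I * fderiv ℝ F z (I * e) = 2 * conj e * dbar F z := by
  rw [(fderiv ℝ F z).apply_add_I_mul_apply_I_mul, dbar]
  ring

theorem dbar_mul {f g : ℂ → ℂ} {z : ℂ} (hf : DifferentiableAt ℝ f z)
    (hg : DifferentiableAt ℝ g z) :
    dbar (fun w => f w * g w) z = f z * dbar g z + g z * dbar f z := by
  simp only [dbar, fderiv_fun_mul hf hg, add_apply, smul_apply, smul_eq_mul]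
  ring

theorem dbar_eq_zero_of_differentiableAt {f : ℂ → ℂ} {z : ℂ} (hf : DifferentiableAt ℂ f z) :
    dbar f z = 0 := by
  have h := (fderiv ℂ f z).map_smul I (1 : ℂ)
  rw [smul_eq_mul, smul_eq_mul, mul_one] at h
  rw [dbar, hf.fderiv_restrictScalars ℝ, ContinuousLinearMap.coe_restrictScalars', h]
  linear_combination (1 / 2 * fderiv ℂ f z 1) * I_sq

theorem dbar_mul_of_differentiableAt {f g : ℂ → ℂ} {z : ℂ} (hf : DifferentiableAt ℂ f z)
    (hg : DifferentiableAt ℝ g z) : dbar (fun w => f w * g w) z = f z * dbar g z := by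
  rw [dbar_mul (hf.restrictScalars ℝ) hg, dbar_eq_zero_of_differentiableAt hf, mul_zero, add_zero]

section
variable {E : Type*} [NormedAddCommGroup E] [NormedSpace ℝ E] {f : ℝ × ℝ → E} {p : ℝ × ℝ}
  {f' : E}

theorem fderiv_apply_one_zero_of_hasDerivAt (hf : DifferentiableAt ℝ f p)
    (h : HasDerivAt (fun s => f (s, p.2)) f' p.1) : fderiv ℝ f p (1, 0) = f' :=
  (hf.hasFDerivAt.comp_hasDerivAt p.1
    ((hasDerivAt_id p.1).prodMk (hasDerivAt_const p.1 p.2))).unique h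

theorem fderiv_apply_zero_one_of_hasDerivAt (hf : DifferentiableAt ℝ f p)
    (h : HasDerivAt (fun s => f (p.1, s)) f' p.2) : fderiv ℝ f p (0, 1) = f' :=
  (hf.hasFDerivAt.comp_hasDerivAt p.2
    ((hasDerivAt_const p.2 p.1).prodMk (hasDerivAt_id p.2))).unique h

end

theorem circleMap_zero_eq_mul (ρ t : ℝ) : circleMap 0 ρ t = ρ * circleMap 0 1 t := by
  simp [circleMap]

theorem hasDerivAt_circleMap_radius (c : ℂ) (ρ t : ℝ) :
    HasDerivAt (fun s : ℝ => circleMap c s t) (circleMap 0 1 t) ρ := by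
  simpa [circleMap] using ((ofRealCLM.hasDerivAt (x := ρ)).mul_const (exp (t * I))).const_add c

theorem differentiable_circleMap_uncurry (c : ℂ) :
    Differentiable ℝ (fun p : ℝ × ℝ => circleMap c p.1 p.2) := by
  unfold circleMap; fun_prop

theorem differentiableAt_polar_fields {F : ℂ → ℂ} {p : ℝ × ℝ}
    (hF : DifferentiableAt ℝ F (circleMap 0 p.1 p.2)) :
    DifferentiableAt ℝ (fun p : ℝ × ℝ => circleMap 0 p.1 p.2 * F (circleMap 0 p.1 p.2)) p ∧
      DifferentiableAt ℝ
        (fun p : ℝ × ℝ => I * circleMap 0 1 p.2 * F (circleMap 0 p.1 p.2)) p := by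
  have hFP := hF.comp p (differentiable_circleMap_uncurry 0 p)
  exact ⟨(differentiable_circleMap_uncurry 0 p).fun_mul hFP,
    (((differentiable_circleMap 0 1 p.2).comp (f := Prod.snd) p differentiableAt_snd).const_mul
      I).fun_mul hFP⟩

theorem polar_divergence_eq_two_mul_dbar {F : ℂ → ℂ} {ρ t : ℝ}
    (hF : DifferentiableAt ℝ F (circleMap 0 ρ t)) :
    fderiv ℝ (fun p : ℝ × ℝ => circleMap 0 p.1 p.2 * F (circleMap 0 p.1 p.2)) (ρ, t) (1, 0)
      + fderiv ℝ (fun p : ℝ × ℝ => I * circleMap 0 1 p.2 * F (circleMap 0 p.1 p.2)) (ρ, t)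
          (0, 1)
      = 2 * ρ * dbar F (circleMap 0 ρ t) := by
  obtain ⟨hfd, hgd⟩ := differentiableAt_polar_fields (p := (ρ, t)) hF
  have hFr := hF.hasFDerivAt.comp_hasDerivAt ρ (hasDerivAt_circleMap_radius 0 ρ t)
  have hFt := hF.hasFDerivAt.comp_hasDerivAt t (hasDerivAt_circleMap 0 ρ t)
  rw [fderiv_apply_one_zero_of_hasDerivAt hfd ((hasDerivAt_circleMap_radius 0 ρ t).fun_mul hFr),
    fderiv_apply_zero_one_of_hasDerivAt hgd
      (((hasDerivAt_circleMap 0 1 t).const_mul I).fun_mul hFt)]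
  have hz := circleMap_zero_eq_mul ρ t
  have hunit : conj (circleMap 0 1 t) * circleMap 0 1 t = 1 := by
    rw [conj_mul', norm_circleMap_zero]; simp
  have hdbar := fderiv_add_I_mul_fderiv_I_mul F (circleMap 0 ρ t) (circleMap 0 1 t)
  generalize circleMap 0 ρ t = z at *
  generalize circleMap 0 1 t = e at *
  have hlin : fderiv ℝ F z (z * I) = ρ * fderiv ℝ F z (I * e) := by
    rw [← real_smul, ← map_smul, real_smul, hz]
    ring_nf
  rw [hlin]
  -- with `z = ρ e`: `e F + z DF(e) - e F + i e DF(i z) = ρ e (DF(e) + i DF(i e)) = 2 ρ e ē ∂̄F`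
  linear_combination
    (ρ * e) * hdbar + 2 * ρ * dbar F z * hunit + e * F z * I_sq + fderiv ℝ F z e * hz

theorem Complex.polarCoord_symm_eq_circleMap (p : ℝ × ℝ) :
    Complex.polarCoord.symm p = circleMap 0 p.1 p.2 := by
  simp [circleMap, exp_mul_I]

section
variable {E : Type*} [NormedAddCommGroup E] [NormedSpace ℝ E]

theorem integral_ball_eq_integral_polar {W : ℂ → E} {r : ℝ} (hr : 0 ≤ r)
    (hW : ContinuousOn W (closedBall 0 r)) :
    ∫ z in ball (0 : ℂ) r, W z = ∫ ρ in 0..r, ∫ t in 0..2 * π, ρ • W (circleMap 0 ρ t) := by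
  set P : ℝ × ℝ → ℂ := fun p => circleMap 0 p.1 p.2
  have hpolar : polarCoord.target ∩ P ⁻¹' ball 0 r = Ioo 0 r ×ˢ Ioo (-π) π := by
    ext ⟨ρ, t⟩
    simp only [P, polarCoord_target, mem_inter_iff, mem_prod, mem_preimage, mem_ball_zero_iff,
      norm_circleMap_zero, mem_Ioi, mem_Ioo]
    constructor
    · rintro ⟨⟨hρ, ht⟩, hρr⟩
      exact ⟨⟨hρ, by rwa [abs_of_pos hρ] at hρr⟩, ht⟩
    · rintro ⟨⟨hρ, hρr⟩, ht⟩
      exact ⟨⟨hρ, ht⟩, by rwa [abs_of_pos hρ]⟩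
  have hint : IntegrableOn (fun p => p.1 • W (P p)) (Icc 0 r ×ˢ Icc (-π) π) := by
    refine ContinuousOn.integrableOn_compact (isCompact_Icc.prod isCompact_Icc) ?_
    refine continuous_fst.continuousOn.smul (hW.comp (by fun_prop) ?_)
    rintro ⟨ρ, t⟩ ⟨hρ, -⟩
    simpa [P, abs_of_nonneg hρ.1] using hρ.2
  calc ∫ z in ball (0 : ℂ) r, W z
      = ∫ p in polarCoord.target, p.1 • (ball (0 : ℂ) r).indicator W (P p) := by
        rw [← MeasureTheory.integral_indicator measurableSet_ball,
          ← Complex.integral_comp_polarCoord_symm]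
        simp only [Complex.polarCoord_symm_eq_circleMap, P]
    _ = ∫ p in polarCoord.target, (P ⁻¹' ball 0 r).indicator (fun p => p.1 • W (P p)) p := by
        congr 1 with p
        rw [indicator_smul_apply, ← indicator_comp_right]
        rfl
    _ = ∫ ρ in 0..r, ∫ t in -π..π, ρ • W (circleMap 0 ρ t) := by
        rw [setIntegral_indicator (measurableSet_ball.preimage (by fun_prop)), hpolar,
          Measure.volume_eq_prod, setIntegral_prod _
            (hint.mono_set (prod_mono Ioo_subset_Icc_self Ioo_subset_Icc_self)),
          intervalIntegral.integral_of_le hr, ← integral_Ioc_eq_integral_Ioo]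
        simp_rw [intervalIntegral.integral_of_le (neg_le_self pi_pos.le),
          integral_Ioc_eq_integral_Ioo]
        rfl
    _ = ∫ ρ in 0..r, ∫ t in 0..2 * π, ρ • W (circleMap 0 ρ t) := by
        refine intervalIntegral.integral_congr fun ρ _ => ?_
        have hper : Function.Periodic (fun t => ρ • W (circleMap 0 ρ t)) (2 * π) := fun t => by
          simp only [periodic_circleMap 0 ρ t]
        simpa [neg_add_eq_sub, two_mul] using hper.intervalIntegral_add_eq (-π) 0
end

theorem ContDiffOn.continuousOn_dbar {F : ℂ → ℂ} {U : Set ℂ} (hU : IsOpen U)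
    (hF : ContDiffOn ℝ 1 F U) : ContinuousOn (dbar F) U := by
  have hF' := hF.continuousOn_fderiv_of_isOpen hU le_rfl
  exact continuousOn_const.mul ((hF'.clm_apply continuousOn_const).add
    (continuousOn_const.mul (hF'.clm_apply continuousOn_const)))

theorem two_mul_integral_polar_dbar {F : ℂ → ℂ} {U : Set ℂ} {r : ℝ}
    (hU : IsOpen U) (hF : ContDiffOn ℝ 1 F U) (hr : 0 ≤ r) (hrU : closedBall 0 r ⊆ U) :
    2 * ∫ ρ in 0..r, ∫ t in 0..2 * π, ρ • dbar F (circleMap 0 ρ t)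
      = ∫ t in 0..2 * π, circleMap 0 r t * F (circleMap 0 r t) := by
  set P : ℝ × ℝ → ℂ := fun p => circleMap 0 p.1 p.2
  set f : ℝ × ℝ → ℂ := fun p => P p * F (P p)
  set g : ℝ × ℝ → ℂ := fun p => I * circleMap 0 1 p.2 * F (P p)
  set K : Set (ℝ × ℝ) := uIcc 0 r ×ˢ uIcc 0 (2 * π)
  have hPK : ∀ p ∈ K, P p ∈ U := by
    rintro ⟨ρ, t⟩ ⟨hρ, -⟩
    rw [uIcc_of_le hr] at hρ
    exact hrU (by simpa [P, abs_of_nonneg hρ.1] using hρ.2)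
  have hFd : ∀ p ∈ K, DifferentiableAt ℝ F (P p) := fun p hp =>
    (hF.differentiableOn one_ne_zero).differentiableAt (hU.mem_nhds (hPK p hp))
  have hfd : ∀ p ∈ K, DifferentiableAt ℝ f p := fun p hp =>
    (differentiableAt_polar_fields (hFd p hp)).1
  have hgd : ∀ p ∈ K, DifferentiableAt ℝ g p := fun p hp =>
    (differentiableAt_polar_fields (hFd p hp)).2
  have hdiv : ∀ p ∈ K, fderiv ℝ f p (1, 0) + fderiv ℝ g p (0, 1) = 2 * (p.1 • dbar F (P p)) :=
    fun p hp => by rw [polar_divergence_eq_two_mul_dbar (hFd p hp), real_smul, mul_assoc]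
  have hK : IsCompact K := isCompact_uIcc.prod isCompact_uIcc
  have hdbarK : ContinuousOn (fun p : ℝ × ℝ => dbar F (P p)) K :=
    (hF.continuousOn_dbar hU).comp (differentiable_circleMap_uncurry 0).continuous.continuousOn hPK
  have hint : IntegrableOn (fun p => fderiv ℝ f p (1, 0) + fderiv ℝ g p (0, 1)) K :=
    ((continuousOn_const.mul (continuous_fst.continuousOn.smul hdbarK)).integrableOn_compact
      hK).congr_fun (fun p hp => (hdiv p hp).symm) hK.measurableSet
  have hIoo : Ioo (min 0 r) (max 0 r) ×ˢ Ioo (min 0 (2 * π)) (max 0 (2 * π)) ⊆ K :=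
    prod_mono Ioo_subset_Icc_self Ioo_subset_Icc_self
  have hgreen := integral2_divergence_prod_of_hasFDerivAt f g (fderiv ℝ f) (fderiv ℝ g) 0 0 r
    (2 * π) (fun p hp => (hfd p hp).continuousAt.continuousWithinAt)
    (fun p hp => (hgd p hp).continuousAt.continuousWithinAt)
    (fun p hp => (hfd p (hIoo hp)).hasFDerivAt) (fun p hp => (hgd p (hIoo hp)).hasFDerivAt) hint
  have hg_periodic : ∀ ρ, g (ρ, 2 * π) = g (ρ, 0) := fun ρ => by
    simp only [g, P]
    rw [← zero_add (2 * π), periodic_circleMap, periodic_circleMap]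
  have hf_center : ∀ t, f (0, t) = 0 := fun t => by simp [f, P]
  simp only [hg_periodic, hf_center, sub_self, zero_add, intervalIntegral.integral_zero,
    sub_zero] at hgreen
  rw [← hgreen, ← intervalIntegral.integral_const_mul]
  refine intervalIntegral.integral_congr fun ρ hρ => ?_
  rw [← intervalIntegral.integral_const_mul]
  exact intervalIntegral.integral_congr fun t ht => (hdiv (ρ, t) ⟨hρ, ht⟩).symm

theorem circleIntegral_eq_two_mul_I_mul_integral_dbar {F : ℂ → ℂ} {U : Set ℂ} {r : ℝ}
    (hU : IsOpen U) (hF : ContDiffOn ℝ 1 F U) (hr : 0 ≤ r) (hrU : closedBall 0 r ⊆ U) :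
    (∮ z in C(0, r), F z) = 2 * I * ∫ z in ball (0 : ℂ) r, dbar F z := by
  rw [integral_ball_eq_integral_polar hr ((hF.continuousOn_dbar hU).mono hrU), mul_right_comm,
    two_mul_integral_polar_dbar hU hF hr hrU, circleIntegral,
    ← intervalIntegral.integral_mul_const]
  refine intervalIntegral.integral_congr fun t _ => ?_
  simp only [deriv_circleMap, smul_eq_mul]
  ring

/-- Stokes-theorem step: for `f` holomorphic on the open unit disk, `u` continuously
differentiable on the open unit disk, and `0 < r < 1`,
`(1/2π) ∫₀^{2π} f(re^{it}) u(re^{it}) dt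
  = (1/(π r²)) ∬_{|z|<r} f(z) ∂_{z̄}(u(z) z̄) dx dy`,
where `∂_{z̄} = (1/2)(∂/∂x + i ∂/∂y)`. -/
theorem stmt4 (f u : ℂ → ℂ)
    (hf : DifferentiableOn ℂ f (ball (0 : ℂ) 1))
    (hu : ContDiffOn ℝ 1 u (ball (0 : ℂ) 1))
    (r : ℝ) (hr0 : 0 < r) (hr1 : r < 1) :
    (1 / (2 * (Real.pi : ℂ))) *
        ∫ t in (0:ℝ)..(2 * Real.pi),
          f (r * Complex.exp (t * Complex.I)) * u (r * Complex.exp (t * Complex.I))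
      = (1 / ((Real.pi : ℂ) * r ^ 2)) *
          ∫ z in ball (0 : ℂ) r,
            f z * ((1 / 2) *
              (fderiv ℝ (fun w => u w * (starRingEnd ℂ) w) z 1
                + Complex.I * fderiv ℝ (fun w => u w * (starRingEnd ℂ) w) z Complex.I)) := by
  set G : ℂ → ℂ := fun w => u w * conj w
  have hfR : ContDiffOn ℝ 1 f (ball 0 1) := (hf.contDiffOn isOpen_ball).restrict_scalars ℝ
  have hG : ContDiffOn ℝ 1 G (ball 0 1) := hu.mul conjCLE.contDiff.contDiffOn
  have hgreen := circleIntegral_eq_two_mul_I_mul_integral_dbar isOpen_ball (hfR.mul hG) hr0.le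
    (closedBall_subset_ball hr1)
  have hholo : ∫ z in ball (0 : ℂ) r, dbar (fun w => f w * G w) z
      = ∫ z in ball (0 : ℂ) r, f z * dbar G z :=
    setIntegral_congr_fun measurableSet_ball fun z hz => by
      have hz1 : ball (0 : ℂ) 1 ∈ nhds z := isOpen_ball.mem_nhds (ball_subset_ball hr1.le hz)
      exact dbar_mul_of_differentiableAt (hf.differentiableAt hz1)
        ((hG.differentiableOn one_ne_zero).differentiableAt hz1)
  have hboundary : (∮ z in C(0, r), f z * G z) = I * r ^ 2 * ∫ t in (0:ℝ)..(2 * π),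
      f (r * exp (t * I)) * u (r * exp (t * I)) := by
    rw [circleIntegral, ← intervalIntegral.integral_const_mul]
    refine intervalIntegral.integral_congr fun t _ => ?_
    have hnorm : conj (circleMap 0 r t) * circleMap 0 r t = r ^ 2 := by
      rw [conj_mul', norm_circleMap_zero, abs_of_pos hr0]
    simp only [deriv_circleMap, smul_eq_mul, G, ← circleMap_zero]
    linear_combination I * f (circleMap 0 r t) * u (circleMap 0 r t) * hnorm
  rw [hholo, hboundary, mul_assoc, mul_comm 2 I, mul_assoc] at hgreen
  change _ = _ * ∫ z in ball (0 : ℂ) r, f z * dbar G z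
  have hpi : (π : ℂ) ≠ 0 := ofReal_ne_zero.2 pi_pos.ne'
  have hr : (r : ℂ) ≠ 0 := ofReal_ne_zero.2 hr0.ne'
  field_simp
  linear_combination mul_left_cancel₀ I_ne_zero hgreen
end

section
/- Let 0 < r < 1 and let k be a probability Borel measure on the unit circle (equivalently, on [0, 2π)). Define ψ(z) = ∫ 1/(1 − z r e^{−it'}) dk(t') for |z| < 1/r. Then ψ is holomorphic on {z ∈ ℂ : |z| < 1/r}, and for every f in the disk algebra A(𝔻), ∫ f(r e^{it'}) dk(t') = (1/2π) ∫₀^{2π} f(e^{it}) conj(ψ(e^{it})) dt. -/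
open Complex MeasureTheory Metric

/-!
By the Cauchy formula on the unit circle, `f w = (2π)⁻¹ ∫₀^{2π} f(e^{it}) (1 - w e^{-it})⁻¹ dt`
for `|w| < 1`, and the kernel is bounded by `(1 - r)⁻¹` uniformly in `|w| ≤ r`. Taking
`w = r e^{it'}`, integrating against `k` and exchanging the two integrals turns the `k`-integral of
the kernel into `conj ψ(e^{it})`. Holomorphy of `ψ` is differentiation under the integral sign,
dominated uniformly on each disk `|z| < s` with `s < 1/r`.
-/

theorem norm_inv_one_sub_le {𝕜 : Type*} [NormedDivisionRing 𝕜] {z : 𝕜} {ρ : ℝ}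
    (hz : ‖z‖ ≤ ρ) (hρ : ρ < 1) : ‖(1 - z)⁻¹‖ ≤ (1 - ρ)⁻¹ := by
  have h : 1 - ρ ≤ ‖1 - z‖ := by
    have := norm_sub_norm_le (1 : 𝕜) z
    rw [norm_one] at this
    linarith
  rw [norm_inv]
  exact inv_anti₀ (by linarith) h

theorem hasDerivAt_inv_one_sub_mul {𝕜 : Type*} [NontriviallyNormedField 𝕜] {x c : 𝕜}
    (h : 1 - x * c ≠ 0) : HasDerivAt (fun z ↦ (1 - z * c)⁻¹) (c / (1 - x * c) ^ 2) x := by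
  simpa using (((hasDerivAt_id x).mul_const c).const_sub 1).fun_inv h

theorem differentiableOn_integral_inv_one_sub_mul {α : Type*} [MeasurableSpace α]
    (μ : Measure α) [IsFiniteMeasure μ] {g : α → ℂ} (hg : AEStronglyMeasurable g μ) {R : ℝ}
    (hgR : ∀ a, ‖g a‖ ≤ R) :
    DifferentiableOn ℂ (fun z ↦ ∫ a, (1 - z * g a)⁻¹ ∂μ) (ball 0 R⁻¹) := by
  intro z₀ hz₀
  obtain ⟨s, hz₀s, hsR⟩ := exists_between (mem_ball_zero_iff.mp hz₀)
  have hR : 0 < R := inv_pos.mp ((norm_nonneg z₀).trans_lt (hz₀s.trans hsR))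
  have hs : 0 ≤ s := (norm_nonneg z₀).trans hz₀s.le
  have hsR' : s * R < 1 := by simpa [hR.ne'] using mul_lt_mul_of_pos_right hsR hR
  have hnorm : ∀ x ∈ ball (0 : ℂ) s, ∀ a, ‖x * g a‖ ≤ s * R := fun x hx a ↦ by
    rw [norm_mul]
    exact mul_le_mul (mem_ball_zero_iff.mp hx).le (hgR a) (norm_nonneg _) hs
  have hinv : ∀ x ∈ ball (0 : ℂ) s, ∀ a, ‖(1 - x * g a)⁻¹‖ ≤ (1 - s * R)⁻¹ :=
    fun x hx a ↦ norm_inv_one_sub_le (hnorm x hx a) hsR'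
  have hderiv : ∀ a, ∀ x ∈ ball (0 : ℂ) s,
      HasDerivAt (fun z ↦ (1 - z * g a)⁻¹) (g a / (1 - x * g a) ^ 2) x := by
    intro a x hx
    refine hasDerivAt_inv_one_sub_mul fun h ↦ ?_
    have := hnorm x hx a
    rw [← sub_eq_zero.mp h, norm_one] at this
    linarith
  have hmeas : ∀ x : ℂ, AEStronglyMeasurable (fun a ↦ (1 - x * g a)⁻¹) μ := fun x ↦
    ((hg.aemeasurable.const_mul x).const_sub 1).inv.aestronglyMeasurable
  have hz₀mem : z₀ ∈ ball (0 : ℂ) s := mem_ball_zero_iff.mpr hz₀s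
  have hint : Integrable (fun a ↦ (1 - z₀ * g a)⁻¹) μ :=
    (integrable_const (1 - s * R)⁻¹).mono' (hmeas z₀) (.of_forall (hinv z₀ hz₀mem))
  have hmeas_deriv : AEStronglyMeasurable (fun a ↦ g a / (1 - z₀ * g a) ^ 2) μ :=
    (hg.aemeasurable.div
      (((hg.aemeasurable.const_mul z₀).const_sub 1).pow_const 2)).aestronglyMeasurable
  have hbound : ∀ a, ∀ x ∈ ball (0 : ℂ) s,
      ‖g a / (1 - x * g a) ^ 2‖ ≤ R * ((1 - s * R)⁻¹) ^ 2 := by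
    intro a x hx
    rw [div_eq_mul_inv, norm_mul, ← inv_pow, norm_pow]
    gcongr
    exacts [hgR a, hinv x hx a]
  exact (hasDerivAt_integral_of_dominated_loc_of_deriv_le (isOpen_ball.mem_nhds hz₀mem)
    (.of_forall hmeas) hint hmeas_deriv (.of_forall hbound) (integrable_const _)
    (.of_forall hderiv)).2.differentiableAt.differentiableWithinAt

theorem two_pi_inv_smul_integral_mul_cauchy_kernel {f : ℂ → ℂ}
    (hfc : ContinuousOn f (closedBall 0 1)) (hfd : DifferentiableOn ℂ f (ball 0 1))
    {w : ℂ} (hw : w ∈ ball 0 1) :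
    (2 * Real.pi)⁻¹ • ∫ t in (0 : ℝ)..2 * Real.pi,
      f (exp (t * I)) * (1 - w * exp (-(t * I)))⁻¹ = f w := by
  have hf : DiffContOnCl ℂ f (ball 0 |1|) := by
    rw [abs_one]
    exact ⟨hfd, by rwa [closure_ball 0 one_ne_zero]⟩
  rw [← hf.circleAverage_smul_div (by rwa [abs_one]), Real.circleAverage_def]
  congr 1
  refine intervalIntegral.integral_congr fun t _ ↦ ?_
  have he : exp (t * I) ≠ 0 := exp_ne_zero _
  simp only [circleMap_zero, ofReal_one, one_mul, sub_zero, smul_eq_mul, exp_neg]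
  rw [← div_eq_mul_inv w, one_sub_div he, inv_div, mul_comm]

theorem integrable_cauchy_kernel_prod {α : Type*} [MeasurableSpace α] (μ : Measure α)
    [IsFiniteMeasure μ] {f : ℂ → ℂ} (hfc : ContinuousOn f (closedBall 0 1)) {w : α → ℂ}
    (hw : Measurable w) {ρ : ℝ} (hwρ : ∀ a, ‖w a‖ ≤ ρ) (hρ : ρ < 1) (a b : ℝ) :
    Integrable (Function.uncurry fun (t : ℝ) a ↦ f (exp (t * I)) * (1 - w a * exp (-(t * I)))⁻¹)
      ((volume.restrict (Set.uIoc a b)).prod μ) := by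
  have : IsFiniteMeasure (volume.restrict (Set.uIoc a b)) := Real.isFiniteMeasure_restrict_Ioc _ _
  have hcirc : ∀ t : ℝ, exp (t * I) ∈ closedBall (0 : ℂ) 1 := fun t ↦ by
    simp [norm_exp_ofReal_mul_I]
  have hf_circ : Continuous fun t : ℝ ↦ f (exp (t * I)) :=
    hfc.comp_continuous (by fun_prop) hcirc
  obtain ⟨C, hC⟩ := (isCompact_closedBall (0 : ℂ) 1).exists_bound_of_continuousOn hfc
  refine (integrable_const (C * (1 - ρ)⁻¹)).mono' ?_ (.of_forall fun p ↦ ?_)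
  · exact ((hf_circ.measurable.comp measurable_fst).mul (((hw.comp measurable_snd).mul
      ((by fun_prop : Continuous fun t : ℝ ↦ exp (-(t * I))).measurable.comp
        measurable_fst)).const_sub 1).inv).aestronglyMeasurable
  · have hker : ‖w p.2 * exp (-(p.1 * I))‖ ≤ ρ := by
      simpa [norm_exp] using hwρ p.2
    rw [Function.uncurry_apply_pair, norm_mul]
    exact mul_le_mul (hC _ (hcirc p.1)) (norm_inv_one_sub_le hker hρ) (norm_nonneg _)
      ((norm_nonneg _).trans (hC _ (hcirc p.1)))

theorem integral_comp_eq_integral_mul_integral_cauchy_kernel {α : Type*}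
    [MeasurableSpace α] (μ : Measure α) [IsFiniteMeasure μ] {f : ℂ → ℂ}
    (hfc : ContinuousOn f (closedBall 0 1)) (hfd : DifferentiableOn ℂ f (ball 0 1))
    {w : α → ℂ} (hw : Measurable w) {ρ : ℝ} (hwρ : ∀ a, ‖w a‖ ≤ ρ) (hρ : ρ < 1) :
    ∫ a, f (w a) ∂μ = (2 * Real.pi)⁻¹ • ∫ t in (0 : ℝ)..2 * Real.pi,
      f (exp (t * I)) * ∫ a, (1 - w a * exp (-(t * I)))⁻¹ ∂μ := by
  calc ∫ a, f (w a) ∂μ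
      = ∫ a, (2 * Real.pi)⁻¹ • (∫ t in (0 : ℝ)..2 * Real.pi,
          f (exp (t * I)) * (1 - w a * exp (-(t * I)))⁻¹) ∂μ :=
        integral_congr_ae (.of_forall fun a ↦ (two_pi_inv_smul_integral_mul_cauchy_kernel hfc hfd
          (mem_ball_zero_iff.mpr ((hwρ a).trans_lt hρ))).symm)
    _ = (2 * Real.pi)⁻¹ • ∫ t in (0 : ℝ)..2 * Real.pi,
          ∫ a, f (exp (t * I)) * (1 - w a * exp (-(t * I)))⁻¹ ∂μ := by
        rw [integral_smul, intervalIntegral_integral_swap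
          (integrable_cauchy_kernel_prod μ hfc hw hwρ hρ _ _)]
    _ = _ := by simp_rw [integral_const_mul]

/-- For `0 < r < 1` and a probability measure `k` on the unit circle (parametrized by
angles), the Borel transform `ψ(z) = ∫ 1/(1 − z r e^{−it'}) dk(t')` is holomorphic on
`D(0,1/r)` and, for every `f` in the disk algebra,
`∫ f(r e^{it'}) dk(t') = (1/2π) ∫₀^{2π} f(e^{it}) conj(ψ(e^{it})) dt`. -/
theorem stmt13 (r : ℝ) (hr0 : 0 < r) (hr1 : r < 1)
    (k : Measure ℝ) [IsProbabilityMeasure k]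
    (ψ : ℂ → ℂ)
    (hψ : ∀ z, ψ z = ∫ t', (1 - z * r * Complex.exp (-(t' * Complex.I)))⁻¹ ∂k) :
    DifferentiableOn ℂ ψ (ball (0 : ℂ) (1 / r)) ∧
    (∀ f : ℂ → ℂ, ContinuousOn f (closedBall (0 : ℂ) 1) →
      DifferentiableOn ℂ f (ball (0 : ℂ) 1) →
      ∫ t', f (r * Complex.exp (t' * Complex.I)) ∂k =
        (1 / (2 * (Real.pi : ℂ))) *
          ∫ t in (0:ℝ)..(2 * Real.pi),
            f (Complex.exp (t * Complex.I)) *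
              (starRingEnd ℂ) (ψ (Complex.exp (t * Complex.I)))) := by
  have hnorm : ∀ s : ℝ, ‖(r : ℂ) * exp (s * I)‖ ≤ r := fun s ↦ by
    simp [norm_exp, abs_of_pos hr0]
  refine ⟨?_, fun f hfc hfd ↦ ?_⟩
  · have hψ' : ψ = fun z ↦ ∫ t', (1 - z * (r * exp (-(t' * I))))⁻¹ ∂k :=
      funext fun z ↦ by simp_rw [hψ, mul_assoc]
    rw [hψ', one_div]
    exact differentiableOn_integral_inv_one_sub_mul k (by fun_prop) fun s ↦ by
      simpa using hnorm (-s)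
  · have hconj : ∀ t : ℝ, (starRingEnd ℂ) (ψ (exp (t * I))) =
        ∫ t', (1 - r * exp (t' * I) * exp (-(t * I)))⁻¹ ∂k := fun t ↦ by
      rw [hψ, ← integral_conj]
      congr 1
      funext t'
      simp only [map_inv₀, map_sub, map_one, map_mul, ← exp_conj, conj_ofReal, conj_I, mul_neg,
        map_neg, neg_neg, inv_inj, sub_right_inj]
      ring
    rw [integral_comp_eq_integral_mul_integral_cauchy_kernel k hfc hfd
      (by fun_prop) hnorm hr1]
    simp_rw [hconj, real_smul]
    push_cast
    ring
end

section
/- Let H be a complex Hilbert space, let A and B be bounded linear operators on H with ‖A‖ ≤ 1 and ‖B‖ ≤ 1, and let e₁, …, e_k be an orthonormal family in H whose span V satisfies B V ⊆ V. Then for every natural number j, | ∑_{i=1}^k ⟨e_i, (A^j − B^j) e_i⟩ | ≤ j · ∑_{i=1}^k ‖(A − B) e_i‖. -/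
/-!
Expanding `A ^ (j + 1) - B ^ (j + 1) = A ^ j (A - B) + (A ^ j - B ^ j) B` reduces the estimate, by
induction on `j`, to a bound for a single term `∑ᵢ ⟪eᵢ, T (C eᵢ)⟫` with `C` a contraction leaving
`V = span {eᵢ}` invariant. Expanding `C eᵢ` in the orthonormal basis of `V` moves `C` to the left:
the sum equals `∑ₗ ⟪wₗ, T eₗ⟫`, where `wₗ` represents the functional `⟪eₗ, C ·⟫` on `V` and so
has norm at most `‖C‖`. Hence it is bounded by `‖C‖ ∑ₗ ‖T eₗ‖`.
-/

open scoped InnerProductSpace ComplexConjugate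

theorem pow_succ_sub_pow_succ_eq {R : Type*} [Ring R] (a b : R) (n : ℕ) :
    a ^ (n + 1) - b ^ (n + 1) = a ^ n * (a - b) + (a ^ n - b ^ n) * b := by
  rw [pow_succ, pow_succ]
  noncomm_ring

theorem ContinuousLinearMap.norm_pow_le_one {𝕜 E : Type*} [NontriviallyNormedField 𝕜]
    [SeminormedAddCommGroup E] [NormedSpace 𝕜 E] {T : E →L[𝕜] E} (hT : ‖T‖ ≤ 1) (n : ℕ) :
    ‖T ^ n‖ ≤ 1 := by
  rcases n.eq_zero_or_pos with rfl | hn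
  · exact ContinuousLinearMap.norm_id_le
  · exact (norm_pow_le' T hn).trans (pow_le_one₀ (norm_nonneg T) hT)

namespace Orthonormal

variable {𝕜 E ι : Type*} [RCLike 𝕜] [SeminormedAddCommGroup E] [InnerProductSpace 𝕜 E]
  [Fintype ι] {e : ι → E} {A B : E →L[𝕜] E}

theorem sum_inner_smul_eq_of_mem_span (he : Orthonormal 𝕜 e) {v : E}
    (hv : v ∈ Submodule.span 𝕜 (Set.range e)) : ∑ i, ⟪e i, v⟫_𝕜 • e i = v := by
  obtain ⟨c, rfl⟩ := (Submodule.mem_span_range_iff_exists_fun 𝕜).mp hv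
  simp only [he.inner_right_fintype]

theorem norm_sum_conj_apply_smul_le (he : Orthonormal 𝕜 e) (f : E →L[𝕜] 𝕜) :
    ‖∑ i, conj (f (e i)) • e i‖ ≤ ‖f‖ := by
  set w := ∑ i, conj (f (e i)) • e i
  have hw : ⟪w, w⟫_𝕜 = f w := by
    simp only [w, he.inner_sum, map_sum, map_smul, smul_eq_mul, RCLike.conj_conj, mul_comm]
  have hsq : ‖w‖ ^ 2 ≤ ‖f‖ * ‖w‖ := by
    rw [← inner_self_eq_norm_sq (𝕜 := 𝕜), inner_self_re_eq_norm, hw]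
    exact f.le_opNorm w
  nlinarith [norm_nonneg w, norm_nonneg f]

theorem sum_inner_apply_apply_eq (he : Orthonormal 𝕜 e) (T C : E →L[𝕜] E)
    (hC : ∀ i, C (e i) ∈ Submodule.span 𝕜 (Set.range e)) :
    ∑ i, ⟪e i, T (C (e i))⟫_𝕜 = ∑ l, ⟪∑ i, conj ⟪e l, C (e i)⟫_𝕜 • e i, T (e l)⟫_𝕜 := by
  calc ∑ i, ⟪e i, T (C (e i))⟫_𝕜
      = ∑ i, ∑ l, ⟪e l, C (e i)⟫_𝕜 * ⟪e i, T (e l)⟫_𝕜 := by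
        refine Finset.sum_congr rfl fun i _ => ?_
        conv_lhs => rw [← he.sum_inner_smul_eq_of_mem_span (hC i)]
        simp only [map_sum, map_smul, inner_sum, inner_smul_right]
    _ = ∑ l, ∑ i, ⟪e l, C (e i)⟫_𝕜 * ⟪e i, T (e l)⟫_𝕜 := Finset.sum_comm
    _ = _ := by simp only [sum_inner, inner_smul_left, RCLike.conj_conj]

theorem norm_sum_inner_apply_apply_le (he : Orthonormal 𝕜 e) (T C : E →L[𝕜] E)
    (hC : ∀ i, C (e i) ∈ Submodule.span 𝕜 (Set.range e)) :
    ‖∑ i, ⟪e i, T (C (e i))⟫_𝕜‖ ≤ ‖C‖ * ∑ i, ‖T (e i)‖ := by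
  rw [he.sum_inner_apply_apply_eq T C hC, Finset.mul_sum]
  refine (norm_sum_le _ _).trans (Finset.sum_le_sum fun l _ => ?_)
  have hrow : ‖∑ i, conj ⟪e l, C (e i)⟫_𝕜 • e i‖ ≤ ‖C‖ := by
    calc _ ≤ ‖(innerSL 𝕜 (e l)).comp C‖ := he.norm_sum_conj_apply_smul_le _
      _ ≤ ‖innerSL 𝕜 (e l)‖ * ‖C‖ := ContinuousLinearMap.opNorm_comp_le _ _
      _ = ‖C‖ := by rw [innerSL_apply_norm, he.norm_eq_one, one_mul]
  exact (norm_inner_le_norm _ _).trans (mul_le_mul_of_nonneg_right hrow (norm_nonneg _))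

theorem norm_sum_inner_pow_sub_pow_apply_le (he : Orthonormal 𝕜 e)
    (hA : ‖A‖ ≤ 1) (hB : ‖B‖ ≤ 1)
    (hinv : ∀ v ∈ Submodule.span 𝕜 (Set.range e), B v ∈ Submodule.span 𝕜 (Set.range e))
    (j : ℕ) {C : E →L[𝕜] E} (hC : ‖C‖ ≤ 1) (hCe : ∀ i, C (e i) ∈ Submodule.span 𝕜 (Set.range e)) :
    ‖∑ i, ⟪e i, (A ^ j - B ^ j) (C (e i))⟫_𝕜‖ ≤ j * ∑ i, ‖(A - B) (e i)‖ := by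
  induction j generalizing C with
  | zero => simp
  | succ j ih =>
    have hfirst : ‖∑ i, ⟪e i, (A ^ j * (A - B)) (C (e i))⟫_𝕜‖ ≤ ∑ i, ‖(A - B) (e i)‖ := by
      refine (he.norm_sum_inner_apply_apply_le _ C hCe).trans ?_
      refine (mul_le_of_le_one_left (by positivity) hC).trans (Finset.sum_le_sum fun i _ => ?_)
      exact ((A ^ j).le_opNorm _).trans
        (mul_le_of_le_one_left (norm_nonneg _) (ContinuousLinearMap.norm_pow_le_one hA j))
    have hsecond : ‖∑ i, ⟪e i, (A ^ j - B ^ j) ((B * C) (e i))⟫_𝕜‖ ≤ j * ∑ i, ‖(A - B) (e i)‖ :=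
      ih ((norm_mul_le B C).trans (mul_le_one₀ hB (norm_nonneg C) hC)) fun i => hinv _ (hCe i)
    rw [pow_succ_sub_pow_succ_eq]
    simp only [add_apply, inner_add_right, Finset.sum_add_distrib]
    calc _ ≤ _ := norm_add_le _ _
      _ ≤ _ := add_le_add hfirst hsecond
      _ = _ := by push_cast; ring

end Orthonormal

/-- Trace-per-unit-volume estimate: for contractions `A, B` on a complex Hilbert space and
an orthonormal family `e₁, …, e_k` whose span is invariant under `B`, for every `j`,
`|∑ᵢ ⟪eᵢ, (A^j − B^j) eᵢ⟫| ≤ j ∑ᵢ ‖(A − B) eᵢ‖`. -/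
theorem stmt18 {H : Type*} [NormedAddCommGroup H] [InnerProductSpace ℂ H]
    (A B : H →L[ℂ] H) (hA : ‖A‖ ≤ 1) (hB : ‖B‖ ≤ 1)
    (k : ℕ) (e : Fin k → H) (he : Orthonormal ℂ e)
    (hinv : ∀ v ∈ Submodule.span ℂ (Set.range e), B v ∈ Submodule.span ℂ (Set.range e))
    (j : ℕ) :
    ‖∑ i, ⟪e i, (A ^ j - B ^ j) (e i)⟫_ℂ‖ ≤ (j : ℝ) * ∑ i, ‖(A - B) (e i)‖ :=
  he.norm_sum_inner_pow_sub_pow_apply_le hA hB hinv j (C := 1) ContinuousLinearMap.norm_id_le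
    fun i => Submodule.subset_span (Set.mem_range_self i)
end
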